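/- Fix an unambiguous configuration $(x,w)$ and an index $\ell$ with $w_\ell > 0$. Let $k = k(x,w,\ell)$ be the killed index and $w^* = g(x,w,\ell)$ the updated weights. If $w^*_k \ge 1$ and $k \neq \ell$, then $k(x, w^*, \ell) \neq \ell$. -/

import Mathlib

open Finset

/-- The barycenter after the particle at site `ℓ` branches: total weight `N + 1`. -/
noncomputable def branchBary {d N : ℕ} (x : Fin N → EuclideanSpace ℝ (Fin d))
    (w : Fin N → ℕ) (ℓ : Fin N) : EuclideanSpace ℝ (Fin d) :=
  ((N : ℝ) + 1)⁻¹ • ((∑ i, (w i : ℝ) • x i) + x ℓ)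

/-- A configuration is unambiguous if for every multiplicity vector `f` summing to
`N + 1`, the distances of the points to the corresponding barycenter are pairwise
distinct. -/
def Unambiguous {d N : ℕ} (x : Fin N → EuclideanSpace ℝ (Fin d)) : Prop :=
  ∀ f : Fin N → ℕ, (∑ i, f i) = N + 1 → ∀ j k : Fin N, j ≠ k →
    ‖x j - ((N : ℝ) + 1)⁻¹ • ∑ i, (f i : ℝ) • x i‖ ≠
      ‖x k - ((N : ℝ) + 1)⁻¹ • ∑ i, (f i : ℝ) • x i‖

/-- `k` is the index killed when site `ℓ` branches: among the positive-weight sites,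
`x k` is farthest from the post-branching barycenter. -/
def IsKilled {d N : ℕ} (x : Fin N → EuclideanSpace ℝ (Fin d)) (w : Fin N → ℕ)
    (ℓ k : Fin N) : Prop :=
  0 < w k ∧ ∀ j, 0 < w j → ‖x j - branchBary x w ℓ‖ ≤ ‖x k - branchBary x w ℓ‖

/-! If `k` was killed, unambiguity makes `x ℓ` strictly closer than `x k` to the barycenter `b`.
The update moves the barycenter to `b + (x ℓ - x k) / (N + 1)`, towards `x ℓ`, which preserves
this strict inequality; since `k` keeps positive weight, `ℓ` cannot be the new farthest site. -/

/-- The squared distances of `p` and of `q` to the shifted center differ by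
`‖p - b‖² - ‖q - b‖² - 2c‖p - q‖²`. -/
lemma norm_sub_add_smul_sub_lt {E : Type*} [NormedAddCommGroup E] [InnerProductSpace ℝ E]
    {p q b : E} {c : ℝ} (h : ‖p - b‖ < ‖q - b‖) (hc : 0 ≤ c) :
    ‖p - (b + c • (p - q))‖ < ‖q - (b + c • (p - q))‖ := by
  have hp : p - (b + c • (p - q)) = (p - b) - c • (p - q) := by abel
  have hq : q - (b + c • (p - q)) = (q - b) - c • (p - q) := by abel
  have hinner : inner ℝ (p - b) (p - q) - inner ℝ (q - b) (p - q) = ‖p - q‖ ^ 2 := by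
    rw [← inner_sub_left, sub_sub_sub_cancel_right, real_inner_self_eq_norm_sq]
  rw [hp, hq, ← sq_lt_sq₀ (norm_nonneg _) (norm_nonneg _), norm_sub_sq_real (p - b),
    norm_sub_sq_real (q - b), real_inner_smul_right, real_inner_smul_right]
  have hsq : ‖p - b‖ ^ 2 < ‖q - b‖ ^ 2 := by gcongr
  nlinarith [sq_nonneg ‖p - q‖]

section Barycenter

variable {d N : ℕ} (x : Fin N → EuclideanSpace ℝ (Fin d))

lemma sum_natCast_add_ite_smul (v : Fin N → ℕ) (m : Fin N) :
    ∑ i, ((v i + if i = m then 1 else 0 : ℕ) : ℝ) • x i = ∑ i, (v i : ℝ) • x i + x m := by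
  simp only [Nat.cast_add, add_smul, sum_add_distrib, Nat.cast_ite, Nat.cast_one, Nat.cast_zero,
    ite_smul, one_smul, zero_smul, sum_ite_eq', mem_univ, if_true]

lemma branchBary_eq_smul_sum (w : Fin N → ℕ) (ℓ : Fin N) :
    branchBary x w ℓ =
      ((N : ℝ) + 1)⁻¹ • ∑ i, ((w i + if i = ℓ then 1 else 0 : ℕ) : ℝ) • x i := by
  rw [branchBary, sum_natCast_add_ite_smul]

/-- `w'` is `w` with one unit of weight moved from `k` to `ℓ`, stated additively to avoid
truncated subtraction. -/
lemma branchBary_eq_add_smul_sub {w w' : Fin N → ℕ} {ℓ k : Fin N}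
    (h : ∀ j, w' j + (if j = k then 1 else 0) = w j + (if j = ℓ then 1 else 0)) :
    branchBary x w' ℓ = branchBary x w ℓ + ((N : ℝ) + 1)⁻¹ • (x ℓ - x k) := by
  have hsum : ∑ i, (w' i : ℝ) • x i + x k = ∑ i, (w i : ℝ) • x i + x ℓ := by
    simp only [← sum_natCast_add_ite_smul, h]
  rw [branchBary, branchBary, eq_sub_of_add_eq hsum, ← smul_add]
  congr 1
  abel

lemma Unambiguous.norm_sub_branchBary_ne (hU : Unambiguous x) {w : Fin N → ℕ}
    (hw : ∑ i, w i = N) (ℓ : Fin N) {j k : Fin N} (hjk : j ≠ k) :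
    ‖x j - branchBary x w ℓ‖ ≠ ‖x k - branchBary x w ℓ‖ := by
  rw [branchBary_eq_smul_sum]
  refine hU _ ?_ j k hjk
  simp [sum_add_distrib, hw]

lemma IsKilled.norm_sub_branchBary_lt (hU : Unambiguous x) {w : Fin N → ℕ}
    (hw : ∑ i, w i = N) {ℓ k j : Fin N} (hk : IsKilled x w ℓ k) (hjk : j ≠ k) (hj : 0 < w j) :
    ‖x j - branchBary x w ℓ‖ < ‖x k - branchBary x w ℓ‖ :=
  (hk.2 j hj).lt_of_ne (hU.norm_sub_branchBary_ne x hw ℓ hjk)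

end Barycenter

theorem stmt15 {d N : ℕ} (x : Fin N → EuclideanSpace ℝ (Fin d)) (w : Fin N → ℕ)
    (hw : ∑ i, w i = N) (hU : Unambiguous x) (ℓ k : Fin N) (hℓ : 0 < w ℓ)
    (hk : IsKilled x w ℓ k) (hkℓ : k ≠ ℓ)
    (wstar : Fin N → ℕ)
    (hws : wstar = fun j => w j + (if j = ℓ then 1 else 0) - (if j = k then 1 else 0))
    (hwk : 1 ≤ wstar k)
    (k' : Fin N) (hk' : IsKilled x wstar ℓ k') :
    k' ≠ ℓ := by
  have hmove : ∀ j, wstar j + (if j = k then 1 else 0) = w j + (if j = ℓ then 1 else 0) := by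
    intro j
    have hkpos := hk.1
    subst hws
    split_ifs <;> simp_all
    omega
  have hlt : ‖x ℓ - branchBary x wstar ℓ‖ < ‖x k - branchBary x wstar ℓ‖ := by
    rw [branchBary_eq_add_smul_sub x hmove]
    exact norm_sub_add_smul_sub_lt (hk.norm_sub_branchBary_lt x hU hw hkℓ.symm hℓ)
      (by positivity)
  rintro rfl
  exact (hk'.2 k hwk).not_gt hlt
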